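/- Let z_1, ..., z_L ∈ ℂ^D, w_1, ..., w_L ∈ ℝ, and p_1, ..., p_K ∈ ℂ^D. Define q_k = vec(p_k p_k†) ∈ ℂ^{D²}, let Q be the D² × K complex matrix whose k-th column is q_k, set Ĉ = Σ_{ℓ=1}^L w_ℓ z_ℓ z_ℓ† and v̂ ∈ ℝ^K with entries v̂_k = Σ_{ℓ=1}^L w_ℓ |p_k† z_ℓ|². If the D² × D² matrix Q·Q† is invertible, then (Q·Q†)^{-1} · Q · v̂ = vec(Ĉ); that is, the MuChaPro least-squares reconstruction from the linearly despeckled projections coincides with the linear multi-channel estimator. -/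

import Mathlib

/-!
The projections are linear in the covariance: `v̂_k = p_kᴴ Ĉ p_k = q_kᴴ vec(Ĉ)`, so `v̂ = Qᴴ vec(Ĉ)`
and the least-squares formula returns `(Q Qᴴ)⁻¹ Q Qᴴ vec(Ĉ) = vec(Ĉ)`.
-/

open ComplexConjugate Matrix

namespace Matrix

variable {n ι 𝕜 : Type*} [Fintype n]

theorem star_uncurry_vecMulVec_dotProduct {R : Type*} [CommSemiring R] [StarRing R]
    (u v : n → R) (C : Matrix n n R) :
    star (Function.uncurry (vecMulVec u (star v))) ⬝ᵥ Function.uncurry C = star u ⬝ᵥ C *ᵥ v := by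
  simp only [dotProduct, mulVec, Fintype.sum_prod_type, Function.uncurry, Pi.star_apply,
    vecMulVec_apply, star_mul', star_star, Finset.mul_sum]
  refine Finset.sum_congr rfl fun a _ => Finset.sum_congr rfl fun b _ => ?_
  ring

theorem star_dotProduct_vecMulVec_mulVec [RCLike 𝕜] (p z : n → 𝕜) :
    star p ⬝ᵥ vecMulVec z (star z) *ᵥ p = ‖star p ⬝ᵥ z‖ ^ 2 := by
  rw [vecMulVec_mulVec, star_dotProduct z p, ← RCLike.mul_conj]
  simp only [MulOpposite.smul_eq_mul_unop, MulOpposite.unop_op, dotProduct_smul, RCLike.star_def]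

theorem star_dotProduct_sum_smul_vecMulVec_mulVec [RCLike 𝕜] (s : Finset ι) (w : ι → ℝ)
    (z : ι → n → 𝕜) (p : n → 𝕜) :
    star p ⬝ᵥ (∑ ℓ ∈ s, (w ℓ : 𝕜) • vecMulVec (z ℓ) (star (z ℓ))) *ᵥ p
      = ∑ ℓ ∈ s, (w ℓ : 𝕜) * ‖star p ⬝ᵥ z ℓ‖ ^ 2 := by
  simp only [sum_mulVec, dotProduct_sum, smul_mulVec, dotProduct_smul, smul_eq_mul,
    star_dotProduct_vecMulVec_mulVec]

end Matrix

/-- With `q_k = vec(p_k p_k†)` the columns of the `D² × K` matrix `Q`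
(indexed here by `Fin D × Fin D`, a fixed ordering of the `D²` entries),
`Ĉ = Σ_ℓ w_ℓ z_ℓ z_ℓ†` the linear multi-channel estimator, and
`v̂_k = Σ_ℓ w_ℓ |p_k† z_ℓ|²` the linear single-channel estimates, if `Q·Q†` is
invertible then the MuChaPro reconstruction `(Q·Q†)⁻¹ · Q · v̂` equals `vec(Ĉ)`. -/
theorem muchapro_reconstruction_eq_linear_estimator (D K L : ℕ)
    (z : Fin L → Fin D → ℂ) (w : Fin L → ℝ) (p : Fin K → Fin D → ℂ)
    (Q : Matrix (Fin D × Fin D) (Fin K) ℂ)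
    (hQ : ∀ a b k, Q (a, b) k = p k a * conj (p k b))
    (Chat : Matrix (Fin D) (Fin D) ℂ)
    (hChat : Chat = ∑ ℓ, (w ℓ : ℂ) • Matrix.vecMulVec (z ℓ) (star (z ℓ)))
    (vhat : Fin K → ℝ)
    (hvhat : ∀ k, vhat k = ∑ ℓ, w ℓ * ‖∑ a, conj (p k a) * z ℓ a‖ ^ 2)
    (hinv : IsUnit (Q * Qᴴ)) :
    (Q * Qᴴ)⁻¹ *ᵥ (Q *ᵥ fun k => (vhat k : ℂ)) = fun ab => Chat ab.1 ab.2 := by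
  have hcol : ∀ k, (fun ab => Q ab k) = Function.uncurry (vecMulVec (p k) (star (p k))) := by
    intro k
    funext ⟨a, b⟩
    exact hQ a b k
  have hproj : (fun k => (vhat k : ℂ)) = Qᴴ *ᵥ Function.uncurry Chat := by
    funext k
    calc (vhat k : ℂ) = star (p k) ⬝ᵥ Chat *ᵥ p k := by
          rw [hChat, hvhat]
          push_cast
          -- `exact`, not `rw`: the `RCLike` coercion `ℝ → ℂ` is `Complex.ofReal` only up to defeq
          exact (star_dotProduct_sum_smul_vecMulVec_mulVec _ w z (p k)).symm
      _ = (Qᴴ *ᵥ Function.uncurry Chat) k := by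
          rw [← star_uncurry_vecMulVec_dotProduct, ← hcol]
          rfl
  rw [hproj, mulVec_mulVec, mulVec_mulVec, Matrix.mul_assoc,
    nonsing_inv_mul _ ((isUnit_iff_isUnit_det _).mp hinv), one_mulVec]
  rfl
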